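/- arXiv:1812.10596 — 5 statements merged into one kernel-verified Lean document; each statement's English description precedes it below -/
import Mathlib

section
/- The function f(s) = ln(s²)/(π²(s²-1)) for s ∈ ℝ \ {-1, 0, 1} (extended by 1/π² at s = ±1 and by continuity at 0 where the expression tends to +∞ integrably) is a probability density function: it is nonnegative where defined and ∫_{-∞}^{∞} ln(s²)/(π²(s²-1)) ds = 1. -/
/-!
The density `f` is even, and `f (1 / x) / x ^ 2 = f x`, so the substitution `x ↦ 1 / x`
carries `∫_{(1,∞)} f` onto `∫_{(0,1)} f`; hence `∫_ℝ f = 4 ∫_{(0,1)} f`.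
On `(0, 1)` expand `f x = (2 / π ^ 2) (-log x) ∑ₙ x ^ (2n)`; since
`∫_{(0,1)} -log x · x ^ k = 1 / (k + 1) ^ 2`, integrating termwise gives
`∫_{(0,1)} f = (2 / π ^ 2) ∑ₙ 1 / (2n + 1) ^ 2 = (2 / π ^ 2) (π ^ 2 / 8) = 1 / 4`.
-/

open MeasureTheory Real

open Set

theorem hasSum_one_div_odd_sq :
    HasSum (fun n : ℕ => 1 / (2 * n + 1 : ℝ) ^ 2) (π ^ 2 / 8) := by
  have hodd : Summable (fun n : ℕ => 1 / ((2 * n + 1 : ℕ) : ℝ) ^ 2) :=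
    hasSum_zeta_two.summable.comp_injective fun _ _ h => by omega
  have heven : HasSum (fun n : ℕ => 1 / ((2 * n : ℕ) : ℝ) ^ 2) (1 / 4 * (π ^ 2 / 6)) := by
    have h : (fun n : ℕ => 1 / ((2 * n : ℕ) : ℝ) ^ 2) =
        fun n : ℕ => 1 / 4 * (1 / (n : ℝ) ^ 2) :=
      funext fun n => by push_cast; ring
    rw [h]
    exact hasSum_zeta_two.mul_left _
  have hsum := (HasSum.even_add_odd (f := fun n : ℕ => 1 / (n : ℝ) ^ 2) heven
    hodd.hasSum).unique hasSum_zeta_two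
  rw [show π ^ 2 / 8 = ∑' n : ℕ, 1 / ((2 * n + 1 : ℕ) : ℝ) ^ 2 by linarith]
  exact_mod_cast hodd.hasSum

theorem intervalIntegrable_neg_log_mul_pow (k : ℕ) :
    IntervalIntegrable (fun x => -log x * x ^ k) volume 0 1 :=
  intervalIntegral.intervalIntegrable_log'.neg.mul_continuousOn (continuous_pow k).continuousOn

theorem integral_neg_log_mul_pow (k : ℕ) :
    ∫ x in (0 : ℝ)..1, -log x * x ^ k = 1 / (k + 1) ^ 2 := by
  -- Grouping `x * log x` exhibits `F` as continuous at `0` (where `x * log x → 0`).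
  let F : ℝ → ℝ := fun x => x ^ (k + 1) / (k + 1) ^ 2 - x ^ k * (x * log x) / (k + 1)
  have hF_cont : Continuous F := by
    have := continuous_mul_log
    fun_prop
  have hF_deriv (x : ℝ) (hx : x ∈ Ioo 0 1) : HasDerivAt F (-log x * x ^ k) x := by
    have hpow : HasDerivAt (fun x : ℝ => x ^ (k + 1)) ((k + 1) * x ^ k) x := by
      simpa using hasDerivAt_pow (k + 1) x
    have hF : F = fun x => x ^ (k + 1) / (k + 1) ^ 2 - x ^ (k + 1) * log x / (k + 1) :=
      funext fun x => by ring
    rw [hF]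
    have hx0 : x ≠ 0 := hx.1.ne'
    refine ((hpow.div_const ((k + 1) ^ 2)).sub
      ((hpow.mul (hasDerivAt_log hx0)).div_const (k + 1))).congr_deriv ?_
    field_simp
    ring
  rw [intervalIntegral.integral_eq_sub_of_hasDerivAt_of_le zero_le_one hF_cont.continuousOn
    hF_deriv (intervalIntegrable_neg_log_mul_pow k)]
  simp [F]

theorem hasSum_integral_of_nonneg {α ι : Type*} [MeasurableSpace α] [Countable ι]
    {μ : Measure α} {F : ι → α → ℝ} {f : α → ℝ} (hF : ∀ i, Integrable (F i) μ)
    (hF_nonneg : ∀ i, 0 ≤ᵐ[μ] F i) (hf : ∀ᵐ a ∂μ, HasSum (F · a) (f a))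
    (hs : Summable fun i => ∫ a, F i a ∂μ) :
    HasSum (fun i => ∫ a, F i a ∂μ) (∫ a, f a ∂μ) := by
  have hnorm : (fun i => ∫ a, ‖F i a‖ ∂μ) = fun i => ∫ a, F i a ∂μ :=
    funext fun i => integral_congr_ae <| (hF_nonneg i).mono fun _ ha => norm_of_nonneg ha
  rw [integral_congr_ae (hf.mono fun _ ha => ha.tsum_eq.symm)]
  exact hasSum_integral_of_summable_integral_norm hF (hnorm ▸ hs)

noncomputable def cauchyProductDensity (s : ℝ) : ℝ := log (s ^ 2) / (π ^ 2 * (s ^ 2 - 1))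

theorem cauchyProductDensity_nonneg (s : ℝ) : 0 ≤ cauchyProductDensity s := by
  rcases le_total (s ^ 2) 1 with h | h
  · exact div_nonneg_of_nonpos (log_nonpos (sq_nonneg s) h)
      (mul_nonpos_of_nonneg_of_nonpos (by positivity) (by linarith))
  · exact div_nonneg (log_nonneg h) (mul_nonneg (by positivity) (by linarith))

theorem cauchyProductDensity_inv (x : ℝ) :
    cauchyProductDensity x⁻¹ = x ^ 2 * cauchyProductDensity x := by
  rcases eq_or_ne x 0 with rfl | hx
  · simp [cauchyProductDensity]
  rcases eq_or_ne (x ^ 2) 1 with h1 | h1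
  · simp [cauchyProductDensity, inv_pow, h1]
  simp only [cauchyProductDensity, inv_pow, log_inv]
  field_simp
  ring

theorem hasSum_cauchyProductDensity {x : ℝ} (hx : x ∈ Ioo 0 1) :
    HasSum (fun n : ℕ => 2 / π ^ 2 * (-log x * x ^ (2 * n))) (cauchyProductDensity x) := by
  have hx2 : x ^ 2 < 1 := by nlinarith [hx.1, hx.2]
  have hterm : (fun n : ℕ => 2 / π ^ 2 * (-log x * x ^ (2 * n))) =
      fun n => 2 / π ^ 2 * -log x * (x ^ 2) ^ n :=
    funext fun n => by rw [pow_mul]; ring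
  have hval : cauchyProductDensity x = 2 / π ^ 2 * -log x * (1 - x ^ 2)⁻¹ := by
    have : 1 - x ^ 2 ≠ 0 := by linarith
    have : x ^ 2 - 1 ≠ 0 := by linarith
    rw [cauchyProductDensity, log_pow]
    field_simp
    ring
  rw [hterm, hval]
  exact (hasSum_geometric_of_lt_one (sq_nonneg x) hx2).mul_left _

theorem integral_cauchyProductDensity_Ioo : ∫ x in Ioo 0 1, cauchyProductDensity x = 1 / 4 := by
  have hterm (n : ℕ) :
      ∫ x in Ioo 0 1, 2 / π ^ 2 * (-log x * x ^ (2 * n)) = 2 / π ^ 2 * (1 / (2 * n + 1) ^ 2) := by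
    rw [integral_const_mul, ← integral_Ioc_eq_integral_Ioo,
      ← intervalIntegral.integral_of_le zero_le_one, integral_neg_log_mul_pow]
    push_cast
    ring
  have hsum := hasSum_one_div_odd_sq.mul_left (2 / π ^ 2)
  have hseries := hasSum_integral_of_nonneg (μ := volume.restrict (Ioo 0 1))
    (F := fun (n : ℕ) x => 2 / π ^ 2 * (-log x * x ^ (2 * n)))
    (fun n => ((intervalIntegrable_neg_log_mul_pow (2 * n)).1.mono_set
      Ioo_subset_Ioc_self).const_mul _)
    (fun n => (ae_restrict_mem measurableSet_Ioo).mono fun x hx =>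
      mul_nonneg (by positivity) (mul_nonneg (neg_nonneg.2 (log_nonpos hx.1.le hx.2.le))
        (pow_nonneg hx.1.le _)))
    ((ae_restrict_mem measurableSet_Ioo).mono fun x hx => hasSum_cauchyProductDensity hx)
    (by simpa only [hterm] using hsum.summable)
  simp only [hterm] at hseries
  rw [hseries.unique hsum]
  field_simp
  ring

theorem integral_cauchyProductDensity_Ioi_one :
    ∫ x in Ioi 1, cauchyProductDensity x = 1 / 4 := by
  have himage : Inv.inv '' Ioi (1 : ℝ) = Ioo 0 1 := by
    rw [image_inv_eq_inv, inv_Ioi₀ one_pos, inv_one]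
  have hderiv (x : ℝ) (hx : x ∈ Ioi 1) : HasDerivWithinAt Inv.inv (-(x ^ 2)⁻¹) (Ioi 1) x :=
    (hasDerivAt_inv (zero_lt_one.trans hx).ne').hasDerivWithinAt
  rw [← integral_cauchyProductDensity_Ioo, ← himage,
    integral_image_eq_integral_abs_deriv_smul measurableSet_Ioi hderiv inv_injective.injOn]
  refine setIntegral_congr_fun measurableSet_Ioi fun x hx => ?_
  have : x ≠ 0 := (zero_lt_one.trans hx).ne'
  simp [cauchyProductDensity_inv, this]

theorem integral_cauchyProductDensity_Ioi_zero :
    ∫ x in Ioi 0, cauchyProductDensity x = 1 / 2 := by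
  have h₁ := integral_cauchyProductDensity_Ioo
  have h₂ := integral_cauchyProductDensity_Ioi_one
  -- A non-integrable function has Bochner integral `0`,
  -- so a nonzero integral certifies integrability.
  have hint₁ : IntegrableOn cauchyProductDensity (Ioc 0 1) := by
    rw [integrableOn_Ioc_iff_integrableOn_Ioo]
    exact Integrable.of_integral_ne_zero (by norm_num [h₁])
  have hint₂ : IntegrableOn cauchyProductDensity (Ioi 1) :=
    Integrable.of_integral_ne_zero (by norm_num [h₂])
  rw [← Ioc_union_Ioi_eq_Ioi zero_le_one, setIntegral_union Ioc_disjoint_Ioi_same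
    measurableSet_Ioi hint₁ hint₂, integral_Ioc_eq_integral_Ioo, h₁, h₂]
  norm_num

/-- `f(s) = ln(s²)/(π²(s²-1))` is a probability density: nonnegative away from
`{-1, 0, 1}` and with total integral 1 over ℝ. -/
theorem stmt_7 :
    (∀ s : ℝ, s ≠ -1 → s ≠ 0 → s ≠ 1 →
        0 ≤ Real.log (s ^ 2) / (π ^ 2 * (s ^ 2 - 1))) ∧
      ∫ s : ℝ, Real.log (s ^ 2) / (π ^ 2 * (s ^ 2 - 1)) = 1 := by
  refine ⟨fun s _ _ _ => cauchyProductDensity_nonneg s, ?_⟩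
  change ∫ s, cauchyProductDensity s = 1
  have heven : ∫ s, cauchyProductDensity s = ∫ s, cauchyProductDensity |s| := by
    simp only [cauchyProductDensity, sq_abs]
  rw [heven, integral_comp_abs, integral_cauchyProductDensity_Ioi_zero]
  norm_num
end

section
/- For all s > 0 with s ≠ 1, the integral ∫_{-∞}^{∞} |x|/((1+x²)(x² + s²)) dx equals ln(s²)/(s² - 1). -/
/-!
By symmetry the integral is twice `∫₀^∞ x / ((x² + 1)(x² + s²)) dx`. Partial fractions give the
antiderivative `(log (x² + 1) - log (x² + s²)) / (2 (s² - 1))` of the (nonnegative) integrand; it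
tends to `0` at infinity and equals `-log (s²) / (2 (s² - 1))` at `0`.
-/

open Real MeasureTheory Filter Topology Set

namespace Real

variable {a b : ℝ}

theorem tendsto_log_sq_add_sub_log_sq_add (a b : ℝ) :
    Tendsto (fun x : ℝ => log (x ^ 2 + a) - log (x ^ 2 + b)) atTop (𝓝 0) := by
  have hsq : Tendsto (fun x : ℝ => x ^ 2 + b) atTop atTop :=
    tendsto_atTop_add_const_right _ b (tendsto_pow_atTop two_ne_zero)
  refine ((tendsto_log_comp_add_sub_log (a - b)).comp hsq).congr fun x => ?_
  simp only [Function.comp_apply, add_assoc, add_sub_cancel]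

theorem hasDerivAt_log_sq_add_sub_log_sq_add_div (ha : 0 < a) (hb : 0 < b) (hab : a ≠ b)
    (x : ℝ) :
    HasDerivAt (fun x : ℝ => (log (x ^ 2 + a) - log (x ^ 2 + b)) / (2 * (b - a)))
      (x / ((x ^ 2 + a) * (x ^ 2 + b))) x := by
  have hxa : x ^ 2 + a ≠ 0 := by positivity
  have hxb : x ^ 2 + b ≠ 0 := by positivity
  have hba : b - a ≠ 0 := sub_ne_zero.mpr hab.symm
  have hsq (c : ℝ) : HasDerivAt (fun x : ℝ => x ^ 2 + c) (2 * x) x := by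
    simpa using (hasDerivAt_pow 2 x).add_const c
  refine (((hsq a).log hxa).sub ((hsq b).log hxb)).div_const _ |>.congr_deriv ?_
  field_simp
  ring

theorem integral_Ioi_div_sq_add_mul_sq_add (ha : 0 < a) (hb : 0 < b) (hab : a ≠ b) :
    ∫ x in Ioi (0 : ℝ), x / ((x ^ 2 + a) * (x ^ 2 + b)) = log (b / a) / (2 * (b - a)) := by
  have hnonneg : ∀ x ∈ Ioi (0 : ℝ), 0 ≤ x / ((x ^ 2 + a) * (x ^ 2 + b)) := fun x hx => by
    have : 0 < x := hx
    positivity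
  rw [integral_Ioi_of_hasDerivAt_of_nonneg'
    (fun x _ => hasDerivAt_log_sq_add_sub_log_sq_add_div ha hb hab x) hnonneg
    (by simpa using (tendsto_log_sq_add_sub_log_sq_add a b).div_const (2 * (b - a))),
    log_div hb.ne' ha.ne']
  ring_nf

theorem integral_abs_div_sq_add_mul_sq_add (ha : 0 < a) (hb : 0 < b) (hab : a ≠ b) :
    ∫ x : ℝ, |x| / ((x ^ 2 + a) * (x ^ 2 + b)) = log (b / a) / (b - a) := by
  have hsym := integral_comp_abs (f := fun t => t / ((t ^ 2 + a) * (t ^ 2 + b)))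
  simp only [sq_abs] at hsym
  rw [hsym, integral_Ioi_div_sq_add_mul_sq_add ha hb hab]
  field_simp

end Real

/-- For `s > 0`, `s ≠ 1`: `∫_{-∞}^{∞} |x|/((1+x²)(x²+s²)) dx = ln(s²)/(s²-1)`. -/
theorem stmt_9 (s : ℝ) (hs : 0 < s) (hs1 : s ≠ 1) :
    ∫ x : ℝ, |x| / ((1 + x ^ 2) * (x ^ 2 + s ^ 2)) = Real.log (s ^ 2) / (s ^ 2 - 1) := by
  have hs2 : (1 : ℝ) ≠ s ^ 2 := by
    rw [ne_eq, eq_comm, pow_eq_one_iff_of_nonneg hs.le two_ne_zero]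
    exact hs1
  simpa only [add_comm (1 : ℝ), div_one] using
    integral_abs_div_sq_add_mul_sq_add one_pos (pow_pos hs 2) hs2
end

section
/- For every real t, (2/π) ∫₀^{π/2} exp(-|t| sin(2θ)) dθ = I₀(|t|) − L₀(|t|), where I₀ is the modified Bessel function of the first kind of order 0 and L₀ is the modified Struve function of order 0. -/
/-!
Expanding the exponential and integrating termwise, the `n`-th term involves
`∫₀^{π/2} sin(2θ)ⁿ dθ`, which is half the Wallis integral `∫₀^π sinⁿ`. The even Wallis integrals
produce the series of `I₀`; the odd ones produce that of `L₀` through Legendre's duplication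
formula `k! Γ(k + 3/2) = √π (2k+1)! / 2^(2k+1)`. Hence
`∫₀^{π/2} exp(x sin 2θ) dθ = π/2 (I₀(x) + L₀(x))` for every real `x`, and the theorem is the case
`x = -|t|`, as `I₀` is even and `L₀` is odd.
-/

open Real
open scoped Nat

/-- Modified Bessel function of the first kind of order 0. -/
noncomputable def besselI0 (x : ℝ) : ℝ := ∑' k : ℕ, (x / 2) ^ (2 * k) / ((Nat.factorial k : ℝ)) ^ 2

/-- Modified Struve function of order 0. -/
noncomputable def struveL0 (x : ℝ) : ℝ :=
  ∑' k : ℕ, (x / 2) ^ (2 * k + 1) / (Real.Gamma ((k : ℝ) + 3 / 2)) ^ 2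

theorem Real.hasSum_pow_div_factorial_exp (x : ℝ) : HasSum (fun n => x ^ n / n !) (exp x) :=
  Real.exp_eq_exp_ℝ ▸ NormedSpace.expSeries_div_hasSum_exp x

theorem intervalIntegral.hasSum_integral_pow_div_factorial {f : ℝ → ℝ} (hf : Continuous f)
    (a b : ℝ) :
    HasSum (fun n => ∫ x in a..b, f x ^ n / n !) (∫ x in a..b, exp (f x)) := by
  refine intervalIntegral.hasSum_integral_of_dominated_convergence (fun n x => |f x| ^ n / n !)
    (fun n => (by fun_prop : Continuous fun x => f x ^ n / n !).aestronglyMeasurable)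
    (fun n => .of_forall fun x _ => by simp)
    (.of_forall fun x _ => Real.summable_pow_div_factorial _) ?_
    (.of_forall fun x _ => Real.hasSum_pow_div_factorial_exp _)
  simp_rw [fun x => (Real.hasSum_pow_div_factorial_exp |f x|).tsum_eq]
  exact (by fun_prop : Continuous fun x => exp |f x|).intervalIntegrable a b

theorem integral_sin_two_mul_pow (n : ℕ) :
    ∫ θ in (0 : ℝ)..π / 2, sin (2 * θ) ^ n = (∫ x in (0 : ℝ)..π, sin x ^ n) / 2 := by
  rw [intervalIntegral.integral_comp_mul_left (fun x => sin x ^ n) two_ne_zero]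
  simp [mul_div_cancel₀, inv_mul_eq_div]

theorem integral_sin_pow_add_two_zero_pi (n : ℕ) :
    ∫ x in (0 : ℝ)..π, sin x ^ (n + 2) = (n + 1) / (n + 2) * ∫ x in (0 : ℝ)..π, sin x ^ n := by
  simp [integral_sin_pow]

theorem integral_sin_pow_two_mul (k : ℕ) :
    ∫ x in (0 : ℝ)..π, sin x ^ (2 * k) = π * (2 * k)! / (4 ^ k * k ! ^ 2) := by
  induction k with
  | zero => simp
  | succ k ih =>
    rw [show 2 * (k + 1) = 2 * k + 2 by ring, integral_sin_pow_add_two_zero_pi, ih]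
    push_cast [Nat.factorial_succ]
    field_simp
    ring

theorem integral_sin_pow_two_mul_add_one (k : ℕ) :
    ∫ x in (0 : ℝ)..π, sin x ^ (2 * k + 1) = 2 * 4 ^ k * k ! ^ 2 / (2 * k + 1)! := by
  induction k with
  | zero => norm_num
  | succ k ih =>
    rw [show 2 * (k + 1) + 1 = 2 * k + 1 + 2 by ring, integral_sin_pow_add_two_zero_pi, ih]
    push_cast [Nat.factorial_succ]
    field_simp
    ring

theorem Real.Gamma_nat_add_three_halves (k : ℕ) :
    Gamma (k + 3 / 2) = (2 * k + 1)! * √π / (2 ^ (2 * k + 1) * k !) := by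
  have h := Real.Gamma_mul_Gamma_add_half (k + 1)
  have h2k : (2 : ℝ) * (k + 1) = (2 * k + 1 : ℕ) + 1 := by push_cast; ring
  rw [show (k : ℝ) + 1 + 1 / 2 = k + 3 / 2 by ring, h2k, Real.Gamma_nat_eq_factorial,
    Real.Gamma_nat_eq_factorial, sub_add_cancel_right, Real.rpow_neg zero_le_two,
    Real.rpow_natCast] at h
  rw [eq_div_iff (by positivity)]
  calc Gamma (k + 3 / 2) * (2 ^ (2 * k + 1) * k !)
        = k ! * Gamma (k + 3 / 2) * 2 ^ (2 * k + 1) := by ring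
    _ = (2 * k + 1)! * √π := by
        rw [h]
        field_simp

theorem pow_div_factorial_mul_integral_sin_pow_two_mul (x : ℝ) (k : ℕ) :
    x ^ (2 * k) / (2 * k)! * ((∫ θ in (0 : ℝ)..π, sin θ ^ (2 * k)) / 2) =
      π / 2 * ((x / 2) ^ (2 * k) / k ! ^ 2) := by
  rw [integral_sin_pow_two_mul, div_pow, pow_mul 2, show (2 : ℝ) ^ 2 = 4 by norm_num]
  field_simp

theorem pow_div_factorial_mul_integral_sin_pow_two_mul_add_one (x : ℝ) (k : ℕ) :
    x ^ (2 * k + 1) / (2 * k + 1)! * ((∫ θ in (0 : ℝ)..π, sin θ ^ (2 * k + 1)) / 2) =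
      π / 2 * ((x / 2) ^ (2 * k + 1) / Gamma (k + 3 / 2) ^ 2) := by
  rw [integral_sin_pow_two_mul_add_one, Real.Gamma_nat_add_three_halves, div_pow,
    show (4 : ℝ) ^ k = 2 ^ (2 * k) by rw [pow_mul]; norm_num]
  field_simp
  rw [sq_sqrt pi_pos.le]
  ring

theorem besselI0_neg (x : ℝ) : besselI0 (-x) = besselI0 x := by
  simp only [besselI0, neg_div, (even_two_mul _).neg_pow]

theorem struveL0_neg (x : ℝ) : struveL0 (-x) = -struveL0 x := by
  simp only [struveL0, neg_div, (odd_two_mul_add_one _).neg_pow, tsum_neg]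

theorem hasSum_integral_exp_mul_sin_two_mul (x : ℝ) :
    HasSum (fun n => x ^ n / n ! * ((∫ θ in (0 : ℝ)..π, sin θ ^ n) / 2))
      (∫ θ in (0 : ℝ)..π / 2, exp (x * sin (2 * θ))) := by
  convert intervalIntegral.hasSum_integral_pow_div_factorial (f := fun θ => x * sin (2 * θ))
    (by fun_prop) 0 (π / 2) using 2 with n
  simp_rw [mul_pow, mul_div_right_comm, intervalIntegral.integral_const_mul,
    integral_sin_two_mul_pow]

theorem integral_exp_mul_sin_two_mul (x : ℝ) :
    ∫ θ in (0 : ℝ)..π / 2, exp (x * sin (2 * θ)) = π / 2 * (besselI0 x + struveL0 x) := by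
  have h := hasSum_integral_exp_mul_sin_two_mul x
  have hπ : π / 2 ≠ 0 := by positivity
  have heven := h.summable.comp_injective (mul_right_injective₀ two_ne_zero)
  have hodd := h.summable.comp_injective
    ((add_left_injective 1).comp (mul_right_injective₀ two_ne_zero))
  simp only [Function.comp_def, pow_div_factorial_mul_integral_sin_pow_two_mul,
    pow_div_factorial_mul_integral_sin_pow_two_mul_add_one, summable_mul_left_iff hπ] at heven hodd
  rw [mul_add]
  refine h.unique (HasSum.even_add_odd ?_ ?_)
  · simp only [pow_div_factorial_mul_integral_sin_pow_two_mul]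
    exact heven.hasSum.mul_left (π / 2)
  · simp only [pow_div_factorial_mul_integral_sin_pow_two_mul_add_one]
    exact hodd.hasSum.mul_left (π / 2)

/-- `(2/π) ∫₀^{π/2} exp(-|t| sin 2θ) dθ = I₀(|t|) − L₀(|t|)`. -/
theorem stmt_11 (t : ℝ) :
    (2 / π) * ∫ θ in (0 : ℝ)..(π / 2), Real.exp (-|t| * Real.sin (2 * θ)) =
      besselI0 |t| - struveL0 |t| := by
  rw [integral_exp_mul_sin_two_mul, besselI0_neg, struveL0_neg]
  field_simp
  ring
end

section
/- For every a > 0, the density f(r) = (2 ln(a + √(a² + r²)) − ln(r²)) / (π² √(a² + r²)) on ℝ has infinite absolute first moment: ∫_{-∞}^{∞} |r| f(r) dr = ∞. -/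
/-!
For `r ≥ a` the numerator `2 log((a + √(a² + r²)) / r)` is at least `2 log(1 + a / r) ≥ a / r`,
while `√(a² + r²) ≤ 2r`; hence `|r| f(r) ≥ a / (2π² r)`, whose integral over `(a, ∞)` diverges
logarithmically.
-/

open MeasureTheory Real Set

lemma lintegral_Ioi_ofReal_const_div_eq_top {c R : ℝ} (hc : 0 < c) (hR : 0 ≤ R) :
    ∫⁻ r in Ioi R, ENNReal.ofReal (c / r) = ⊤ := by
  by_contra hfin
  have hnonneg : 0 ≤ᵐ[volume.restrict (Ioi R)] fun r : ℝ ↦ c / r := by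
    filter_upwards [ae_restrict_mem measurableSet_Ioi] with r hr
    exact div_nonneg hc.le (hR.trans (le_of_lt hr))
  have hint : IntegrableOn (fun r : ℝ ↦ c / r) (Ioi R) :=
    (lintegral_ofReal_ne_top_iff_integrable (by fun_prop) hnonneg).1 hfin
  refine not_integrableOn_Ioi_inv
    (IntegrableOn.congr_fun (hint.const_mul c⁻¹) (fun r _ ↦ ?_) measurableSet_Ioi)
  simp only [div_eq_mul_inv, inv_mul_cancel_left₀ hc.ne']

lemma div_add_le_log_add_sqrt_sub_log {a r : ℝ} (ha : 0 ≤ a) (hr : 0 < r) :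
    a / (a + r) ≤ log (a + √(a ^ 2 + r ^ 2)) - log r := by
  have hsqrt : r ≤ √(a ^ 2 + r ^ 2) := Real.le_sqrt_of_sq_le (by nlinarith)
  calc a / (a + r) = 1 - ((a + r) / r)⁻¹ := by field_simp; ring
    _ ≤ log ((a + r) / r) := one_sub_inv_le_log_of_pos (by positivity)
    _ = log (a + r) - log r := log_div (by positivity) hr.ne'
    _ ≤ log (a + √(a ^ 2 + r ^ 2)) - log r := by gcongr

lemma div_le_abs_mul_density {a r : ℝ} (ha : 0 < a) (har : a ≤ r) :
    a / (2 * π ^ 2) / r ≤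
      |r| * ((2 * log (a + √(a ^ 2 + r ^ 2)) - log (r ^ 2)) / (π ^ 2 * √(a ^ 2 + r ^ 2))) := by
  have hr : 0 < r := ha.trans_le har
  have hnum : a / r ≤ 2 * log (a + √(a ^ 2 + r ^ 2)) - log (r ^ 2) := by
    have hlog := div_add_le_log_add_sqrt_sub_log ha.le hr
    have : a / r ≤ 2 * (a / (a + r)) :=
      calc a / r = 2 * (a / (2 * r)) := by field_simp
        _ ≤ 2 * (a / (a + r)) := by gcongr; linarith
    rw [log_pow]
    push_cast
    linarith
  have hden : √(a ^ 2 + r ^ 2) ≤ 2 * r := Real.sqrt_le_iff.2 ⟨by positivity, by nlinarith⟩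
  have hnum_nonneg := (div_pos ha hr).le.trans hnum
  rw [abs_of_pos hr, div_div, mul_div_assoc']
  calc a / (2 * π ^ 2 * r) = r * (a / r) / (π ^ 2 * (2 * r)) := by field_simp
    _ ≤ _ := by gcongr

/-- For `a > 0`, the density `f(r) = (2 ln(a + √(a²+r²)) − ln(r²))/(π² √(a²+r²))`
has infinite absolute first moment. -/
theorem stmt_13 (a : ℝ) (ha : 0 < a) :
    ∫⁻ r : ℝ, ENNReal.ofReal
        (|r| * ((2 * Real.log (a + Real.sqrt (a ^ 2 + r ^ 2)) - Real.log (r ^ 2)) /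
          (π ^ 2 * Real.sqrt (a ^ 2 + r ^ 2)))) = ⊤ := by
  refine eq_top_mono ?_
    (lintegral_Ioi_ofReal_const_div_eq_top (c := a / (2 * π ^ 2)) (by positivity) ha.le)
  calc ∫⁻ r in Ioi a, ENNReal.ofReal (a / (2 * π ^ 2) / r)
      ≤ ∫⁻ r in Ioi a, ENNReal.ofReal (|r| * ((2 * log (a + √(a ^ 2 + r ^ 2)) - log (r ^ 2)) /
          (π ^ 2 * √(a ^ 2 + r ^ 2)))) :=
        setLIntegral_mono' measurableSet_Ioi fun r hr ↦
          ENNReal.ofReal_le_ofReal (div_le_abs_mul_density ha (le_of_lt hr))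
    _ ≤ _ := setLIntegral_le_lintegral _ _
end

section
/- For every b > 0, ∫_{-∞}^{∞} (1/(1 + b² s²)) · (ln(s²)/(π²(s²−1))) ds = (1 + (2b/π) ln b) / (1 + b²). -/
open MeasureTheory Real

open Set Filter Topology

-- integrable dominating function
lemma dom_int : IntegrableOn (fun x : ℝ => 2 * x ^ (-(1/2) : ℝ)) (Ioo 0 1) := by
  have h := (intervalIntegral.intervalIntegrable_rpow' (a := (0:ℝ)) (b := 1)
      (r := -(1/2)) (by norm_num)).const_mul 2
  rw [intervalIntegrable_iff_integrableOn_Ioo_of_le zero_le_one] at h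
  simpa using h

lemma log_le_dom {x : ℝ} (hx : x ∈ Ioo (0:ℝ) 1) : |Real.log x| ≤ 2 * x ^ (-(1/2) : ℝ) := by
  have h := Real.abs_log_mul_self_rpow_lt x (1/2) hx.1 hx.2.le (by norm_num)
  rw [abs_mul, abs_of_nonneg (Real.rpow_nonneg hx.1.le _)] at h
  have hx2 : (0:ℝ) < x ^ ((1:ℝ)/2) := Real.rpow_pos_of_pos hx.1 _
  rw [Real.rpow_neg hx.1.le]
  have h2 := (lt_div_iff₀ hx2).mpr h
  calc |Real.log x| ≤ 1 / (1/2) / x ^ ((1:ℝ)/2) := h2.le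
      _ = 2 * (x ^ ((1:ℝ)/2))⁻¹ := by rw [div_eq_mul_inv]; norm_num

lemma integrableOn_of_log_bound {f : ℝ → ℝ} (hm : AEStronglyMeasurable f (volume.restrict (Ioo 0 1)))
    (h : ∀ x ∈ Ioo (0:ℝ) 1, |f x| ≤ |Real.log x|) : IntegrableOn f (Ioo 0 1) := by
  refine Integrable.mono dom_int hm ?_
  rw [ae_restrict_iff' measurableSet_Ioo]
  filter_upwards with x hx
  calc ‖f x‖ ≤ |Real.log x| := h x hx
    _ ≤ 2 * x ^ (-(1/2) : ℝ) := log_le_dom hx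
    _ ≤ ‖2 * x ^ (-(1/2) : ℝ)‖ := le_abs_self _

lemma integrableOn_log_Ioo : IntegrableOn Real.log (Ioo 0 1) :=
  integrableOn_of_log_bound Real.measurable_log.aestronglyMeasurable (fun _ _ => le_rfl)

lemma integrableOn_neg_log_pow (n : ℕ) :
    IntegrableOn (fun x : ℝ => -Real.log x * x ^ n) (Ioo 0 1) := by
  refine integrableOn_of_log_bound ?_ ?_
  · exact ((Real.measurable_log.neg).mul (measurable_id.pow_const n)).aestronglyMeasurable
  · intro x hx
    rw [abs_mul, abs_neg]
    calc |Real.log x| * |x ^ n| ≤ |Real.log x| * 1 := by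
          refine mul_le_mul_of_nonneg_left ?_ (abs_nonneg _)
          rw [abs_of_nonneg (pow_nonneg hx.1.le n)]
          exact pow_le_one₀ hx.1.le hx.2.le
      _ = |Real.log x| := mul_one _

lemma integral_neg_log_pow (n : ℕ) :
    ∫ x in Ioo (0:ℝ) 1, -Real.log x * x ^ n = 1 / ((n:ℝ) + 1) ^ 2 := by
  set c : ℝ := ((n:ℝ) + 1) with hc
  have hcpos : (0:ℝ) < c := by positivity
  set F : ℝ → ℝ := fun x => (x ^ (n+1) * (1 - c * Real.log x)) / c ^ 2 with hF
  have hderiv : ∀ x ∈ Ioo (0:ℝ) 1, HasDerivAt F (-Real.log x * x ^ n) x := by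
    intro x hx
    have h1 : HasDerivAt (fun x : ℝ => x ^ (n+1)) (((n:ℝ)+1) * x ^ n) x := by
      simpa using hasDerivAt_pow (n+1) x
    have h2 : HasDerivAt (fun x : ℝ => 1 - c * Real.log x) (-(c * x⁻¹)) x := by
      simpa using ((Real.hasDerivAt_log hx.1.ne').const_mul c).const_sub 1
    have h3 := (h1.mul h2).div_const (c ^ 2)
    have hx0 : x ≠ 0 := hx.1.ne'
    refine h3.congr_deriv ?_
    field_simp
    ring
  have hlim0 : Tendsto F (𝓝[>] (0:ℝ)) (𝓝 0) := by
    have t1 : Tendsto (fun x : ℝ => x ^ (n+1)) (𝓝[>] (0:ℝ)) (𝓝 0) := by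
      have := (continuous_pow (n+1)).tendsto (0:ℝ)
      simpa using this.mono_left nhdsWithin_le_nhds
    have t2 : Tendsto (fun x : ℝ => Real.log x * x ^ (n+1)) (𝓝[>] (0:ℝ)) (𝓝 0) := by
      have h := tendsto_log_mul_rpow_nhdsGT_zero (r := (n:ℝ)+1) (by positivity)
      refine h.congr' ?_
      filter_upwards [self_mem_nhdsWithin] with x hx
      rw [show ((n:ℝ)+1) = ((n+1 : ℕ) : ℝ) by push_cast; ring, Real.rpow_natCast]
    have : Tendsto (fun x : ℝ => (x ^ (n+1) - c * (Real.log x * x ^ (n+1))) / c ^ 2)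
        (𝓝[>] (0:ℝ)) (𝓝 ((0 - c * 0) / c ^ 2)) := ((t1.sub (t2.const_mul c)).div_const _)
    refine (this.congr (fun x => ?_)).congr' (EventuallyEq.refl _ _) |>.mono_right (by simp)
    simp only [hF]; ring_nf
  have hlim1 : Tendsto F (𝓝[<] (1:ℝ)) (𝓝 (1 / c ^ 2)) := by
    have hFc : ContinuousAt F 1 := by
      have : ContinuousAt (fun x : ℝ => (x ^ (n+1) * (1 - c * Real.log x)) / c ^ 2) 1 := by
        exact (((continuous_pow (n+1)).continuousAt).mul
          ((continuousAt_const).sub ((continuousAt_const).mul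
            (Real.continuousAt_log one_ne_zero)))).div_const _
      exact this
    have : F 1 = 1 / c ^ 2 := by simp [hF]
    exact this ▸ hFc.continuousWithinAt.tendsto
  have hint : IntervalIntegrable (fun x : ℝ => -Real.log x * x ^ n) volume 0 1 := by
    rw [intervalIntegrable_iff_integrableOn_Ioo_of_le zero_le_one]
    exact integrableOn_neg_log_pow n
  have h := intervalIntegral.integral_eq_sub_of_hasDerivAt_of_tendsto zero_lt_one
    hderiv hint hlim0 hlim1
  rw [intervalIntegral.integral_of_le zero_le_one, integral_Ioc_eq_integral_Ioo] at h
  rw [h, hc]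
  simp

set_option maxHeartbeats 1000000 in
lemma hasSum_odd_sq : HasSum (fun k : ℕ => (1:ℝ) / (2 * (k:ℝ) + 1) ^ 2) (π ^ 2 / 8) := by
  have h : HasSum (fun n : ℕ => (1:ℝ) / (n : ℝ) ^ 2) (π ^ 2 / 6) := hasSum_zeta_two
  have heven : HasSum (fun k : ℕ => (1:ℝ) / ((2 * k : ℕ) : ℝ) ^ 2) (π ^ 2 / 24) := by
    have h4 := h.mul_left (1/4)
    have hfe : (fun k : ℕ => (1:ℝ) / ((2 * k : ℕ) : ℝ) ^ 2)
        = fun k : ℕ => 1/4 * ((1:ℝ) / (k:ℝ) ^ 2) := by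
      funext k
      rcases Nat.eq_zero_or_pos k with rfl | hk
      · simp
      · have : ((k:ℝ)) ≠ 0 := Nat.cast_ne_zero.mpr hk.ne'
        push_cast
        field_simp
        ring
    rw [hfe]
    rw [show π ^ 2 / 24 = 1 / 4 * (π ^ 2 / 6) by ring]
    exact h4
  have hsummodd : Summable (fun k : ℕ => (1:ℝ) / ((2 * k + 1 : ℕ) : ℝ) ^ 2) := by
    have hinj : Function.Injective (fun k : ℕ => 2 * k + 1) := by
      intro a b hab
      dsimp at hab
      omega
    exact h.summable.comp_injective hinj
  have hodd := hsummodd.hasSum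
  have htot := HasSum.even_add_odd (f := fun n : ℕ => (1:ℝ) / (n : ℝ) ^ 2) heven hodd
  have hval := h.unique htot
  have heq : (∑' k : ℕ, (1:ℝ) / ((2 * k + 1 : ℕ) : ℝ) ^ 2) = π ^ 2 / 8 := by linarith
  rw [heq] at hodd
  convert hodd using 2 with k
  push_cast; ring

lemma integral_log_div_sq_sub_one_Ioo :
    ∫ x in Ioo (0:ℝ) 1, Real.log x / (x ^ 2 - 1) = π ^ 2 / 8 := by
  have key : ∫ x in Ioo (0:ℝ) 1, ∑' k : ℕ, -Real.log x * x ^ (2 * k)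
      = ∑' k : ℕ, ∫ x in Ioo (0:ℝ) 1, -Real.log x * x ^ (2 * k) := by
    refine integral_tsum (fun k => ((Real.measurable_log.neg).mul
      (measurable_id.pow_const (2*k))).aestronglyMeasurable) ?_
    have hval : ∀ k : ℕ, ∫⁻ x in Ioo (0:ℝ) 1, ‖-Real.log x * x ^ (2*k)‖ₑ
        = ENNReal.ofReal (1 / (2*(k:ℝ) + 1) ^ 2) := by
      intro k
      have hnn : 0 ≤ᵐ[volume.restrict (Ioo (0:ℝ) 1)]
          fun x : ℝ => -Real.log x * x ^ (2*k) := by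
        filter_upwards [ae_restrict_mem measurableSet_Ioo] with x hx
        exact mul_nonneg (neg_nonneg.mpr (Real.log_nonpos hx.1.le hx.2.le))
          (pow_nonneg hx.1.le _)
      have h1 := ofReal_integral_eq_lintegral_ofReal (integrableOn_neg_log_pow (2*k)) hnn
      have h2 : ∫⁻ x in Ioo (0:ℝ) 1, ‖-Real.log x * x ^ (2*k)‖ₑ
          = ∫⁻ x in Ioo (0:ℝ) 1, ENNReal.ofReal (-Real.log x * x ^ (2*k)) := by
        refine lintegral_congr_ae ?_
        filter_upwards [hnn] with x hx
        exact Real.enorm_eq_ofReal hx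
      rw [h2, ← h1, integral_neg_log_pow (2*k)]
      norm_num
    simp_rw [hval]
    rw [← ENNReal.ofReal_tsum_of_nonneg (fun k => by positivity) hasSum_odd_sq.summable]
    exact ENNReal.ofReal_ne_top
  have hcong : ∫ x in Ioo (0:ℝ) 1, Real.log x / (x ^ 2 - 1)
      = ∫ x in Ioo (0:ℝ) 1, ∑' k : ℕ, -Real.log x * x ^ (2 * k) := by
    refine setIntegral_congr_fun measurableSet_Ioo (fun x hx => ?_)
    have hx2 : x ^ 2 < 1 := by nlinarith [hx.1, hx.2]
    have hx2' : (0:ℝ) ≤ x ^ 2 := sq_nonneg x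
    have : ∑' k : ℕ, -Real.log x * x ^ (2 * k) = -Real.log x * ∑' k : ℕ, (x ^ 2) ^ k := by
      rw [tsum_mul_left]
      exact congrArg _ (tsum_congr fun k => pow_mul x 2 k)
    rw [this, tsum_geometric_of_lt_one hx2' hx2]
    have h1 : x ^ 2 - 1 ≠ 0 := by nlinarith
    have h2 : 1 - x ^ 2 ≠ 0 := by nlinarith
    field_simp
    ring
  rw [hcong, key]
  have : ∀ k : ℕ, (∫ x in Ioo (0:ℝ) 1, -Real.log x * x ^ (2 * k))
      = 1 / (2*(k:ℝ) + 1) ^ 2 := by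
    intro k
    rw [integral_neg_log_pow (2*k)]
    norm_num
  simp_rw [this]
  exact hasSum_odd_sq.tsum_eq

lemma integrableOn_log_div_sq_sub_one_Ioo :
    IntegrableOn (fun x : ℝ => Real.log x / (x ^ 2 - 1)) (Ioo 0 1) := by
  have hg : IntegrableOn (fun x : ℝ => (4/3) * |Real.log x| + 2) (Ioo 0 1) := by
    refine Integrable.add ((integrableOn_log_Ioo.abs).const_mul _) ?_
    exact (integrableOn_const_iff).mpr (Or.inr measure_Ioo_lt_top)
  refine Integrable.mono hg
    ((Real.measurable_log.div ((measurable_id.pow_const 2).sub_const 1)).aestronglyMeasurable) ?_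
  filter_upwards [ae_restrict_mem measurableSet_Ioo] with x hx
  have hx0 : (0:ℝ) < x := hx.1
  have hx1 : x < 1 := hx.2
  have hL0 : 0 ≤ -Real.log x := neg_nonneg.mpr (Real.log_nonpos hx0.le hx1.le)
  have hd : (0:ℝ) < 1 - x ^ 2 := by nlinarith
  have habs : ‖Real.log x / (x ^ 2 - 1)‖ = -Real.log x / (1 - x ^ 2) := by
    rw [Real.norm_eq_abs, abs_div, abs_of_neg (by nlinarith : x ^ 2 - 1 < 0)]
    rcases le_or_gt (Real.log x) 0 with h | h
    · rw [abs_of_nonpos h]; ring_nf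
    · linarith [Real.log_nonpos hx0.le hx1.le]
  rw [habs]
  have hrhs : ‖(4/3) * |Real.log x| + 2‖ = (4/3) * (-Real.log x) + 2 := by
    rw [Real.norm_eq_abs, abs_of_nonneg (by positivity), abs_of_nonpos (by linarith)]
  rw [hrhs, div_le_iff₀ hd]
  rcases le_or_gt x (1/2) with hhalf | hhalf
  · nlinarith [mul_nonneg hL0 (sq_nonneg x), mul_nonneg hL0 hx0.le]
  · have hlog : -Real.log x * x ≤ 1 - x := by
      have h1 := Real.log_le_sub_one_of_pos (show (0:ℝ) < x⁻¹ by positivity)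
      rw [Real.log_inv] at h1
      have : -Real.log x ≤ x⁻¹ - 1 := h1
      calc -Real.log x * x ≤ (x⁻¹ - 1) * x := by nlinarith
        _ = 1 - x := by field_simp
    nlinarith [mul_nonneg hL0 hd.le, mul_nonneg hL0 hx0.le]

lemma image_inv_Ioo : (fun x : ℝ => x⁻¹) '' Ioo 0 1 = Ioi 1 := by
  ext y
  constructor
  · rintro ⟨x, ⟨hx0, hx1⟩, rfl⟩
    exact one_lt_inv_iff₀.mpr ⟨hx0, hx1⟩
  · intro hy
    have hy0 : (0:ℝ) < y := lt_trans one_pos hy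
    exact ⟨y⁻¹, ⟨by positivity, inv_lt_one_of_one_lt₀ hy⟩, by simp⟩

lemma hasDeriv_inv_Ioo : ∀ x ∈ Ioo (0:ℝ) 1,
    HasDerivWithinAt (fun x : ℝ => x⁻¹) (-(x^2)⁻¹) (Ioo 0 1) x :=
  fun x hx => (hasDerivAt_inv hx.1.ne').hasDerivWithinAt

lemma injOn_inv_Ioo : InjOn (fun x : ℝ => x⁻¹) (Ioo 0 1) :=
  fun _ _ _ _ h => inv_injective h

lemma integral_inv_cov (g : ℝ → ℝ) :
    ∫ x in Ioi (1:ℝ), g x = ∫ x in Ioo (0:ℝ) 1, (x^2)⁻¹ * g x⁻¹ := by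
  have h := integral_image_eq_integral_abs_deriv_smul measurableSet_Ioo
    hasDeriv_inv_Ioo injOn_inv_Ioo g
  rw [image_inv_Ioo] at h
  rw [h]
  refine setIntegral_congr_fun measurableSet_Ioo (fun x hx => ?_)
  rw [abs_neg, abs_of_nonneg (by positivity), smul_eq_mul]

lemma integrableOn_inv_cov (g : ℝ → ℝ) :
    IntegrableOn g (Ioi 1) ↔ IntegrableOn (fun x : ℝ => (x^2)⁻¹ * g x⁻¹) (Ioo 0 1) := by
  have h := integrableOn_image_iff_integrableOn_abs_deriv_smul measurableSet_Ioo
    hasDeriv_inv_Ioo injOn_inv_Ioo g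
  rw [image_inv_Ioo] at h
  rw [h]
  refine integrableOn_congr_fun (fun x hx => ?_) measurableSet_Ioo
  rw [abs_neg, abs_of_nonneg (by positivity), smul_eq_mul]

lemma q1_cov : ∀ x ∈ Ioo (0:ℝ) 1,
    (x^2)⁻¹ * (Real.log x⁻¹ / ((x⁻¹) ^ 2 - 1)) = Real.log x / (x ^ 2 - 1) := by
  intro x hx
  have hx0 : x ≠ 0 := hx.1.ne'
  have hne : x ^ 2 - 1 ≠ 0 := by nlinarith [hx.1, hx.2]
  have hx2 : x ^ 2 < 1 := by nlinarith [hx.1, hx.2]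
  have h3 : (0:ℝ) < x ^ 2 - x ^ 4 := by nlinarith [mul_pos (mul_pos hx.1 hx.1) (sub_pos.mpr hx2)]
  have hne3 : x ^ 2 - x ^ 4 ≠ 0 := h3.ne'
  rw [Real.log_inv]
  field_simp
  rw [show (1:ℝ) - x ^ 2 = -(x ^ 2 - 1) by ring, div_neg, neg_neg, mul_div_assoc, div_self hne, mul_one]

lemma K_cov : ∀ x ∈ Ioo (0:ℝ) 1,
    (x^2)⁻¹ * (Real.log x⁻¹ / (1 + (x⁻¹) ^ 2)) = -(Real.log x / (1 + x ^ 2)) := by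
  intro x hx
  have hx0 : x ≠ 0 := hx.1.ne'
  have hne : 1 + x ^ 2 ≠ 0 := by positivity
  rw [Real.log_inv]
  field_simp
  ring

lemma integrableOn_K_Ioo : IntegrableOn (fun x : ℝ => Real.log x / (1 + x ^ 2)) (Ioo 0 1) := by
  refine integrableOn_of_log_bound
    ((Real.measurable_log.div ((measurable_const.add (measurable_id.pow_const 2)))).aestronglyMeasurable)
    (fun x hx => ?_)
  rw [abs_div]
  have h1 : (1:ℝ) ≤ |1 + x ^ 2| := by
    rw [abs_of_pos (by positivity)]; nlinarith [sq_nonneg x]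
  calc |Real.log x| / |1 + x ^ 2| ≤ |Real.log x| / 1 :=
        div_le_div_of_nonneg_left (abs_nonneg _) one_pos h1
    _ = |Real.log x| := div_one _

lemma integrableOn_q1_Ioi1 :
    IntegrableOn (fun x : ℝ => Real.log x / (x ^ 2 - 1)) (Ioi 1) := by
  rw [integrableOn_inv_cov]
  exact (integrableOn_congr_fun q1_cov measurableSet_Ioo).mpr integrableOn_log_div_sq_sub_one_Ioo

lemma integral_q1_Ioi1 :
    ∫ x in Ioi (1:ℝ), Real.log x / (x ^ 2 - 1) = π ^ 2 / 8 := by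
  rw [integral_inv_cov, setIntegral_congr_fun measurableSet_Ioo q1_cov,
    integral_log_div_sq_sub_one_Ioo]

lemma integrableOn_K_Ioi1 :
    IntegrableOn (fun x : ℝ => Real.log x / (1 + x ^ 2)) (Ioi 1) := by
  rw [integrableOn_inv_cov]
  exact (integrableOn_congr_fun K_cov measurableSet_Ioo).mpr integrableOn_K_Ioo.neg

lemma integral_K_Ioi1 :
    ∫ x in Ioi (1:ℝ), Real.log x / (1 + x ^ 2)
      = -∫ x in Ioo (0:ℝ) 1, Real.log x / (1 + x ^ 2) := by
  rw [integral_inv_cov, setIntegral_congr_fun measurableSet_Ioo K_cov, integral_neg]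

lemma hdisj : Disjoint (Ioo (0:ℝ) 1) (Ici 1) := by
  rw [Set.disjoint_left]
  rintro x hx hx'
  exact absurd (lt_of_lt_of_le hx.2 hx') (lt_irrefl x)

lemma split_Ioi (f : ℝ → ℝ) (h1 : IntegrableOn f (Ioo 0 1)) (h2 : IntegrableOn f (Ioi 1)) :
    IntegrableOn f (Ioi 0) ∧
    ∫ x in Ioi (0:ℝ), f x = (∫ x in Ioo (0:ℝ) 1, f x) + ∫ x in Ioi (1:ℝ), f x := by
  have h2' : IntegrableOn f (Ici 1) := (integrableOn_Ici_iff_integrableOn_Ioi).mpr h2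
  have hun : Ioo (0:ℝ) 1 ∪ Ici 1 = Ioi 0 := Ioo_union_Ici_eq_Ioi zero_lt_one
  constructor
  · rw [← hun]; exact h1.union h2'
  · rw [← hun, setIntegral_union hdisj measurableSet_Ici h1 h2',
      MeasureTheory.integral_Ici_eq_integral_Ioi]

lemma integrableOn_K_Ioi0 :
    IntegrableOn (fun x : ℝ => Real.log x / (1 + x ^ 2)) (Ioi 0) :=
  (split_Ioi _ integrableOn_K_Ioo integrableOn_K_Ioi1).1

lemma integral_K_Ioi0 :
    ∫ x in Ioi (0:ℝ), Real.log x / (1 + x ^ 2) = 0 := by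
  rw [(split_Ioi _ integrableOn_K_Ioo integrableOn_K_Ioi1).2, integral_K_Ioi1]
  ring

lemma integrableOn_q1_Ioi0 :
    IntegrableOn (fun x : ℝ => Real.log x / (x ^ 2 - 1)) (Ioi 0) :=
  (split_Ioi _ integrableOn_log_div_sq_sub_one_Ioo integrableOn_q1_Ioi1).1

lemma integral_q1_Ioi0 :
    ∫ x in Ioi (0:ℝ), Real.log x / (x ^ 2 - 1) = π ^ 2 / 4 := by
  rw [(split_Ioi _ integrableOn_log_div_sq_sub_one_Ioo integrableOn_q1_Ioi1).2,
    integral_q1_Ioi1, integral_log_div_sq_sub_one_Ioo]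
  ring

section scaled
variable {b : ℝ}

lemma q2_eqOn (hb : 0 < b) : EqOn (fun x : ℝ => Real.log x / (1 + b ^ 2 * x ^ 2))
    (fun x : ℝ => Real.log (b * x) / (1 + (b * x) ^ 2)
      - Real.log b * (1 + (b * x) ^ 2)⁻¹) (Ioi 0) := by
  intro x hx
  have hx0 : (0:ℝ) < x := hx
  have hD : (0:ℝ) < 1 + (b * x) ^ 2 := by positivity
  simp only
  rw [Real.log_mul hb.ne' hx0.ne', mul_pow]
  field_simp
  ring

lemma integrableOn_Kb (hb : 0 < b) :
    IntegrableOn (fun x : ℝ => Real.log (b * x) / (1 + (b * x) ^ 2)) (Ioi 0) := by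
  have h := (integrableOn_Ioi_comp_mul_left_iff
    (fun u : ℝ => Real.log u / (1 + u ^ 2)) 0 hb).mpr
  rw [mul_zero] at h
  exact h integrableOn_K_Ioi0

lemma integrableOn_Cb (hb : 0 < b) :
    IntegrableOn (fun x : ℝ => Real.log b * (1 + (b * x) ^ 2)⁻¹) (Ioi 0) := by
  have h := (integrableOn_Ioi_comp_mul_left_iff
    (fun u : ℝ => (1 + u ^ 2)⁻¹) 0 hb).mpr
  rw [mul_zero] at h
  exact (h integrable_inv_one_add_sq.integrableOn).const_mul _

lemma integrableOn_q2_Ioi0 (hb : 0 < b) :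
    IntegrableOn (fun x : ℝ => Real.log x / (1 + b ^ 2 * x ^ 2)) (Ioi 0) := by
  rw [integrableOn_congr_fun (q2_eqOn hb) measurableSet_Ioi]
  exact (integrableOn_Kb hb).sub (integrableOn_Cb hb)

lemma integral_q2_Ioi0 (hb : 0 < b) :
    ∫ x in Ioi (0:ℝ), Real.log x / (1 + b ^ 2 * x ^ 2) = -(π * Real.log b) / (2 * b) := by
  rw [setIntegral_congr_fun measurableSet_Ioi (q2_eqOn hb),
    integral_sub (integrableOn_Kb hb) (integrableOn_Cb hb)]
  have h1 : ∫ x in Ioi (0:ℝ), Real.log (b * x) / (1 + (b * x) ^ 2) = 0 := by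
    have h := integral_comp_mul_left_Ioi
      (fun u : ℝ => Real.log u / (1 + u ^ 2)) 0 hb
    rw [mul_zero] at h
    rw [h, integral_K_Ioi0, smul_zero]
  have h2 : ∫ x in Ioi (0:ℝ), Real.log b * (1 + (b * x) ^ 2)⁻¹
      = Real.log b * (b⁻¹ * (π / 2)) := by
    rw [MeasureTheory.integral_const_mul]
    congr 1
    have h := integral_comp_mul_left_Ioi (fun u : ℝ => (1 + u ^ 2)⁻¹) 0 hb
    rw [mul_zero] at h
    rw [h, integral_Ioi_inv_one_add_sq, arctan_zero, smul_eq_mul]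
    ring
  rw [h1, h2]
  field_simp
  ring

end scaled

lemma key_decomp {b : ℝ} (hb : 0 < b) (s : ℝ) :
    (1 / (1 + b ^ 2 * s ^ 2)) * (Real.log (s ^ 2) / (π ^ 2 * (s ^ 2 - 1)))
      = (2 / (π ^ 2 * (1 + b ^ 2))) * (Real.log s / (s ^ 2 - 1))
        - (2 * b ^ 2 / (π ^ 2 * (1 + b ^ 2))) * (Real.log s / (1 + b ^ 2 * s ^ 2)) := by
  have hlog : Real.log (s ^ 2) = 2 * Real.log s := by
    rw [Real.log_pow]; push_cast; ring
  by_cases h : s ^ 2 = 1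
  · have hs : s = 1 ∨ s = -1 := mul_self_eq_one_iff.mp (by nlinarith)
    rcases hs with rfl | rfl <;> norm_num [Real.log_neg_eq_log]
  · have h1 : s ^ 2 - 1 ≠ 0 := sub_ne_zero.mpr h
    have h2 : (1:ℝ) + b ^ 2 * s ^ 2 ≠ 0 := by positivity
    have h3 : (π:ℝ) ≠ 0 := Real.pi_ne_zero
    have h4 : (1:ℝ) + b ^ 2 ≠ 0 := by positivity
    rw [hlog]
    field_simp
    ring

lemma main_b {b : ℝ} (hb : 0 < b) :
    ∫ s : ℝ, (1 / (1 + b ^ 2 * s ^ 2)) * (Real.log (s ^ 2) / (π ^ 2 * (s ^ 2 - 1)))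
      = (1 + (2 * b / π) * Real.log b) / (1 + b ^ 2) := by
  have habs : ∫ s : ℝ, (1 / (1 + b ^ 2 * s ^ 2)) * (Real.log (s ^ 2) / (π ^ 2 * (s ^ 2 - 1)))
      = ∫ s : ℝ, (1 / (1 + b ^ 2 * |s| ^ 2)) * (Real.log (|s| ^ 2) / (π ^ 2 * (|s| ^ 2 - 1))) := by
    simp only [sq_abs]
  rw [habs, integral_comp_abs
    (f := fun s : ℝ => (1 / (1 + b ^ 2 * s ^ 2)) * (Real.log (s ^ 2) / (π ^ 2 * (s ^ 2 - 1))))]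
  rw [setIntegral_congr_fun measurableSet_Ioi (fun s _ => key_decomp hb s)]
  rw [integral_sub (integrableOn_q1_Ioi0.const_mul _) ((integrableOn_q2_Ioi0 hb).const_mul _),
    MeasureTheory.integral_const_mul, MeasureTheory.integral_const_mul,
    integral_q1_Ioi0, integral_q2_Ioi0 hb]
  have h3 : (π:ℝ) ≠ 0 := Real.pi_ne_zero
  have h4 : (1:ℝ) + b ^ 2 ≠ 0 := by positivity
  field_simp
  ring

/-- For `t ≠ 0`, with `b = π|t|/2`,
`∫ (1/(1+b²s²)) · (ln(s²)/(π²(s²−1))) ds = (1 + (2b/π) ln b)/(1 + b²)`. -/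
theorem stmt_18 (t : ℝ) (ht : t ≠ 0) :
    ∫ s : ℝ, (1 / (1 + (π * |t| / 2) ^ 2 * s ^ 2)) *
        (Real.log (s ^ 2) / (π ^ 2 * (s ^ 2 - 1))) =
      (1 + (2 * (π * |t| / 2) / π) * Real.log (π * |t| / 2)) / (1 + (π * |t| / 2) ^ 2) := by
  have hb : 0 < π * |t| / 2 := by
    have := Real.pi_pos
    have := abs_pos.mpr ht
    positivity
  exact main_b hb
end
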